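/- arXiv:1401.2713 — 4 statements merged into one kernel-verified Lean document; each statement's English description precedes it below -/
import Mathlib

section
/- Let x = (x_1,...,x_n) and y = (y_1,...,y_n) be discrete probability distributions. Define z by z_{ij} = x_i * y_j for i ≠ j and z_0 = 1 - Σ_{i≠j} z_{ij}. Then the Shannon entropy of z satisfies H(z) ≤ ((2n-1)/n) * log n. -/
/-!
Write `φ = negMulLog` and `s = ∑ i, x i * y i` for the mass of `z_0`. Since
`φ (u * v) = v φ u + u φ v`, the off-diagonal part of `H(z)` is
`∑ i, ((1 - y i) φ (x i) + (1 - x i) φ (y i))`.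

If `s ≥ 1/n`, the tangent lines of `φ` at the uniform values `1/n²` and `1/n` give
`H(z) ≤ (2 - s) log n`. If `s ≤ 1/n`, the function `(1 - v) φ u + (1 - u) φ v` is bounded on
`[0,1]²` by a polynomial in `u v` and `u + v` that is tight at `u = v = 1/n`; summed over `i` it
gives a bound affine in `s` and increasing on `[0, 1/n]`. After the substitution `a = n u`,
`b = n v`, the pointwise bound is the nonnegativity of
`(n - b) klFun a + (n - a) klFun b + c (a - 1) (b - 1)`, which follows from the quadratic lower
bounds `klFun a ≥ (a - 1)² / (2M)` on `[0, M]`, plus an AM-GM step when `a` and `b` lie on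
opposite sides of `1`.
-/

open Real Finset InformationTheory

lemma Real.negMulLog_le_tangent {s t : ℝ} (hs : 0 ≤ s) (ht : 0 < t) :
    negMulLog s ≤ (log t - 1) * s + 1 / t := by
  have h := negMulLog_le_one_sub_self (mul_nonneg ht.le hs)
  rw [negMulLog_mul, negMulLog] at h
  rw [← mul_le_mul_iff_right₀ ht]
  field_simp
  linarith

lemma InformationTheory.sq_div_le_klFun {a M : ℝ} (ha : 0 ≤ a) (haM : a ≤ M) (hM : 1 ≤ M) :
    (a - 1) ^ 2 / (2 * M) ≤ klFun a := by
  set g : ℝ → ℝ := fun t ↦ klFun t - (t - 1) ^ 2 / (2 * M)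
  have hg : ∀ t ≠ 0, HasDerivAt g (log t - (t - 1) / M) t := fun t ht ↦ by
    refine ((hasDerivAt_klFun ht).sub
      ((((hasDerivAt_id t).sub_const 1).pow 2).div_const (2 * M))).congr_deriv ?_
    simp only [id, Nat.cast_ofNat]
    field_simp
    ring
  have hgc : ContinuousOn g (Set.Icc a 1 ∪ Set.Icc 1 a) := by
    have := continuous_klFun; fun_prop
  have hgd : ∀ t ∈ Set.Ioo a 1 ∪ Set.Ioo 1 a, DifferentiableAt ℝ g t := fun t ht ↦
    (hg t (by rcases ht with h | h <;> linarith [h.1])).differentiableAt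
  suffices g 1 ≤ g a by simpa [g, klFun_one] using this
  rcases le_total a 1 with ha1 | ha1
  · refine antitoneOn_of_deriv_nonpos (convex_Icc a 1) (hgc.mono Set.subset_union_left)
      (fun t ht ↦ ?_) (fun t ht ↦ ?_) ⟨le_rfl, ha1⟩ ⟨ha1, le_rfl⟩ ha1 <;>
      rw [interior_Icc] at ht
    · exact (hgd t (Or.inl ht)).differentiableWithinAt
    · have ht0 : 0 < t := ha.trans_lt ht.1
      rw [(hg t ht0.ne').deriv, sub_nonpos]
      calc log t ≤ t - 1 := log_le_sub_one_of_pos ht0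
        _ ≤ (t - 1) / M := by
          rw [le_div_iff₀ (by linarith)]; nlinarith [ht.2]
  · refine monotoneOn_of_deriv_nonneg (convex_Icc 1 a) (hgc.mono Set.subset_union_right)
      (fun t ht ↦ ?_) (fun t ht ↦ ?_) ⟨le_rfl, ha1⟩ ⟨ha1, le_rfl⟩ ha1 <;>
      rw [interior_Icc] at ht
    · exact (hgd t (Or.inr ht)).differentiableWithinAt
    · have ht0 : 0 < t := one_pos.trans ht.1
      rw [(hg t ht0.ne').deriv, sub_nonneg]
      calc (t - 1) / M ≤ (t - 1) / t := by
            gcongr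
            · linarith [ht.1]
            · linarith [ht.2]
        _ = 1 - t⁻¹ := by field_simp
        _ ≤ log t := one_sub_inv_le_log_of_pos ht0

lemma InformationTheory.klFun_mul_eq_negMulLog {N u : ℝ} (hN : 0 < N) :
    klFun (N * u) = N * (u * log N - negMulLog u - u) + 1 := by
  rcases eq_or_ne u 0 with rfl | hu
  · simp [klFun_zero]
  · rw [klFun_apply, negMulLog, log_mul hN.ne' hu]; ring

/-- The admissible coefficients `c` of the cross term in `klFun_cross_nonneg`: `c ≥ 0` settles
the case where `a, b` lie on the same side of `1`, the last inequality the opposite case, and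
`c ≥ log N - 1` makes the final bound increasing in `s` on `[0, 1/N]`. -/
lemma exists_cross_coeff {N : ℝ} (hN : 1 ≤ N) :
    ∃ c, 0 ≤ c ∧ log N - 1 ≤ c ∧ N * (c ^ 2 + 2 * c) ≤ (N - 1) ^ 2 := by
  rcases le_total (log N) 1 with hL | hL
  · exact ⟨0, le_rfl, by linarith, by nlinarith⟩
  refine ⟨log N - 1, by linarith, le_rfl, ?_⟩
  have hN0 : 0 < N := by linarith
  have hsqrt : 0 < √N := sqrt_pos.mpr hN0
  have hLe : log N * exp 1 ≤ 2 * √N := by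
    have h := log_le_sub_one_of_pos (div_pos hsqrt (exp_pos 1))
    rw [log_div hsqrt.ne' (exp_pos 1).ne', log_exp, log_sqrt hN0.le] at h
    have h' : log N / 2 ≤ √N / exp 1 := by linarith
    rw [le_div_iff₀ (exp_pos 1)] at h'
    linarith
  have he : 2.7182818283 < exp 1 := exp_one_gt_d9
  have hNe : exp 1 ≤ N := by rw [← exp_log hN0]; exact exp_le_exp.mpr hL
  have hsq : log N ^ 2 * exp 1 ^ 2 ≤ 4 * N := by
    nlinarith [sq_sqrt hN0.le, mul_nonneg (by linarith : (0:ℝ) ≤ log N) (exp_pos 1).le]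
  have he2 : 7 ≤ exp 1 ^ 2 := by nlinarith
  have hL2 : log N ^ 2 ≤ N - 1 := by
    nlinarith [mul_le_mul_of_nonneg_left he2 (sq_nonneg (log N))]
  nlinarith

lemma InformationTheory.mul_le_klFun_of_one_le_of_le_one {N c a b : ℝ} (hc : 0 ≤ c)
    (hcN : N * (c ^ 2 + 2 * c) ≤ (N - 1) ^ 2) (ha : 1 ≤ a) (haN : a ≤ N) (hb0 : 0 ≤ b)
    (hb : b ≤ 1) : c * (a - 1) * (1 - b) ≤ (N - b) * klFun a + (N - a) * klFun b := by
  have hN : 1 ≤ N := ha.trans haN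
  have hka := sq_div_le_klFun (by linarith) haN hN
  have hkb : (b - 1) ^ 2 / 2 ≤ klFun b := by simpa using sq_div_le_klFun hb0 hb le_rfl
  have hka' : (N - 1) * (a - 1) ^ 2 ≤ 2 * N * ((N - b) * klFun a) := by
    rw [div_le_iff₀ (by positivity)] at hka
    nlinarith [mul_le_mul_of_nonneg_left hka (by linarith : 0 ≤ N - b)]
  rcases le_total (N * c ^ 2) ((N - a) * (N - 1)) with hsmall | hlarge
  · have hkb' : (N - a) * (b - 1) ^ 2 ≤ 2 * ((N - a) * klFun b) := by
      nlinarith [mul_le_mul_of_nonneg_left hkb (by linarith : 0 ≤ N - a)]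
    -- AM-GM between the lower bounds for the two `klFun` terms
    have hscaled : 2 * N * (N - 1) * (c * (a - 1) * (1 - b))
        ≤ 2 * N * (N - 1) * ((N - b) * klFun a + (N - a) * klFun b) := by
      nlinarith [sq_nonneg ((N - 1) * (a - 1) - N * c * (1 - b)),
        mul_le_mul_of_nonneg_left hsmall (sq_nonneg (1 - b)),
        mul_le_mul_of_nonneg_left hka' (by linarith : 0 ≤ N - 1),
        mul_le_mul_of_nonneg_left hkb' (by nlinarith : 0 ≤ N * (N - 1))]
    rcases ha.eq_or_lt with rfl | ha1
    · nlinarith [mul_nonneg (by linarith : 0 ≤ N - b) (klFun_nonneg zero_le_one),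
        mul_nonneg (by linarith : 0 ≤ N - 1) (klFun_nonneg hb0)]
    · exact le_of_mul_le_mul_left hscaled (by nlinarith)
  · -- `a` is so close to `N` that the first term alone pays for the cross term
    have h2c : 2 * N * c ≤ (N - 1) * (a - 1) := by nlinarith
    nlinarith [mul_le_mul_of_nonneg_left h2c (by linarith : 0 ≤ a - 1),
      mul_nonneg (mul_nonneg hc (by linarith : 0 ≤ a - 1)) hb0,
      mul_nonneg (by linarith : 0 ≤ N - a) (klFun_nonneg hb0)]

lemma InformationTheory.klFun_cross_nonneg {N c a b : ℝ} (hc : 0 ≤ c)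
    (hcN : N * (c ^ 2 + 2 * c) ≤ (N - 1) ^ 2) (ha0 : 0 ≤ a) (haN : a ≤ N) (hb0 : 0 ≤ b)
    (hbN : b ≤ N) : 0 ≤ (N - b) * klFun a + (N - a) * klFun b + c * (a - 1) * (b - 1) := by
  have hka := klFun_nonneg ha0
  have hkb := klFun_nonneg hb0
  rcases le_total 1 a with ha | ha <;> rcases le_total 1 b with hb | hb
  · nlinarith [mul_nonneg (mul_nonneg hc (sub_nonneg.2 ha)) (sub_nonneg.2 hb),
      mul_nonneg (sub_nonneg.2 hbN) hka, mul_nonneg (sub_nonneg.2 haN) hkb]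
  · linarith [mul_le_klFun_of_one_le_of_le_one hc hcN ha haN hb0 hb]
  · linarith [mul_le_klFun_of_one_le_of_le_one hc hcN hb hbN ha0 ha]
  · nlinarith [mul_nonneg (mul_nonneg hc (sub_nonneg.2 ha)) (sub_nonneg.2 hb),
      mul_nonneg (sub_nonneg.2 hbN) hka, mul_nonneg (sub_nonneg.2 haN) hkb]

lemma Real.negMulLog_pair_le {N c u v : ℝ} (hN : 1 ≤ N) (hc : 0 ≤ c)
    (hcN : N * (c ^ 2 + 2 * c) ≤ (N - 1) ^ 2)
    (hu0 : 0 ≤ u) (hu1 : u ≤ 1) (hv0 : 0 ≤ v) (hv1 : v ≤ 1) :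
    (1 - v) * negMulLog u + (1 - u) * negMulLog v ≤
      (c + 2 - 2 * log N) * (u * v) + (log N - 1 - (c + 1) / N) * (u + v) + (c / N + 2) / N := by
  have hN0 : 0 < N := by linarith
  have h := klFun_cross_nonneg hc hcN (by positivity : 0 ≤ N * u) (by nlinarith)
    (by positivity : 0 ≤ N * v) (by nlinarith)
  rw [klFun_mul_eq_negMulLog hN0, klFun_mul_eq_negMulLog hN0] at h
  have hid : (c + 2 - 2 * log N) * (u * v) + (log N - 1 - (c + 1) / N) * (u + v) + (c / N + 2) / N
      - ((1 - v) * negMulLog u + (1 - u) * negMulLog v) =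
      ((N - N * v) * (N * (u * log N - negMulLog u - u) + 1)
        + (N - N * u) * (N * (v * log N - negMulLog v - v) + 1)
        + c * (N * u - 1) * (N * v - 1)) / N ^ 2 := by
    field_simp
    ring
  rw [← sub_nonneg, hid]
  exact div_nonneg h (sq_nonneg N)

lemma Finset.sum_sum_ite_ne {ι M : Type*} [Fintype ι] [DecidableEq ι] [AddCommGroup M]
    (f : ι → ι → M) :
    ∑ i, ∑ j, (if i ≠ j then f i j else 0) = ∑ i, ∑ j, f i j - ∑ i, f i i := by
  rw [← sum_sub_distrib]
  refine sum_congr rfl fun i _ ↦ ?_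
  rw [sum_ite, sum_const_zero, add_zero, filter_ne, sum_erase_eq_sub (mem_univ i)]

section OffDiagonal

variable {ι : Type*} [Fintype ι] [DecidableEq ι] {x y : ι → ℝ}

lemma sum_offDiag_mul (hx : ∑ i, x i = 1) (hy : ∑ i, y i = 1) :
    ∑ i, ∑ j, (if i ≠ j then x i * y j else 0) = 1 - ∑ i, x i * y i := by
  rw [sum_sum_ite_ne, ← sum_mul_sum, hx, hy, one_mul]

lemma sum_offDiag_negMulLog_mul (hx : ∑ i, x i = 1) (hy : ∑ i, y i = 1) :
    ∑ i, ∑ j, (if i ≠ j then negMulLog (x i * y j) else 0) =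
      ∑ i, ((1 - y i) * negMulLog (x i) + (1 - x i) * negMulLog (y i)) := by
  simp only [sum_sum_ite_ne, negMulLog_mul, sum_add_distrib, ← sum_mul, ← mul_sum, hx, hy,
    sub_mul, sum_sub_distrib, one_mul]
  ring

lemma offDiag_entropy_le_two_sub_mul_log [Nonempty ι] (hx0 : ∀ i, 0 ≤ x i)
    (hy0 : ∀ i, 0 ≤ y i) (hx : ∑ i, x i = 1) (hy : ∑ i, y i = 1) :
    (∑ i, ∑ j, if i ≠ j then negMulLog (x i * y j) else 0) + negMulLog (∑ i, x i * y i)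
      ≤ (2 - ∑ i, x i * y i) * log (Fintype.card ι) := by
  set N : ℝ := ((Fintype.card ι : ℕ) : ℝ) with hNdef
  set s := ∑ i, x i * y i
  have hN : 0 < N := by simp [N, Fintype.card_pos]
  have hoff : ∀ i j, (if i ≠ j then negMulLog (x i * y j) else 0)
      ≤ if i ≠ j then (2 * log N - 1) * (x i * y j) + 1 / N ^ 2 else 0 := fun i j ↦ by
    split_ifs
    · simpa [log_pow] using
        negMulLog_le_tangent (mul_nonneg (hx0 i) (hy0 j)) (by positivity : 0 < N ^ 2)
    · rfl
  have hdiag : negMulLog s ≤ (log N - 1) * s + 1 / N :=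
    negMulLog_le_tangent (sum_nonneg fun i _ ↦ mul_nonneg (hx0 i) (hy0 i)) hN
  have hsum : ∑ i, ∑ j, (if i ≠ j then (2 * log N - 1) * (x i * y j) + 1 / N ^ 2 else 0)
      = (2 * log N - 1) * (1 - s) + (N ^ 2 - N) / N ^ 2 := by
    simp only [sum_sum_ite_ne, sum_add_distrib, ← mul_sum, sum_const, card_univ, nsmul_eq_mul,
      hx, hy, mul_one, ← hNdef]
    field_simp
    ring
  calc _ ≤ (2 * log N - 1) * (1 - s) + (N ^ 2 - N) / N ^ 2 + ((log N - 1) * s + 1 / N) := by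
        grw [← hsum, ← hdiag]
        gcongr with i _ j _
        exact hoff i j
    _ = (2 - s) * log N := by field_simp; ring

lemma offDiag_entropy_le_of_cross_coeff {c : ℝ} [Nonempty ι] (hc : 0 ≤ c)
    (hcN : Fintype.card ι * (c ^ 2 + 2 * c) ≤ (Fintype.card ι - 1) ^ 2)
    (hx0 : ∀ i, 0 ≤ x i) (hy0 : ∀ i, 0 ≤ y i) (hx : ∑ i, x i = 1) (hy : ∑ i, y i = 1) :
    (∑ i, ∑ j, if i ≠ j then negMulLog (x i * y j) else 0) + negMulLog (∑ i, x i * y i)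
      ≤ 2 * log (Fintype.card ι) - (c + 1) / Fintype.card ι
        + (c + 1 - log (Fintype.card ι)) * ∑ i, x i * y i := by
  set N : ℝ := ((Fintype.card ι : ℕ) : ℝ) with hNdef
  set s := ∑ i, x i * y i with hsdef
  have hN : 1 ≤ N := by simp [N, Nat.one_le_iff_ne_zero, Fintype.card_ne_zero]
  have hle1 {z : ι → ℝ} (hz0 : ∀ i, 0 ≤ z i) (hz : ∑ i, z i = 1) (i : ι) : z i ≤ 1 :=
    hz ▸ single_le_sum (fun j _ ↦ hz0 j) (mem_univ i)
  have hpair i :=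
    negMulLog_pair_le hN hc hcN (hx0 i) (hle1 hx0 hx i) (hy0 i) (hle1 hy0 hy i)
  have hdiag : negMulLog s ≤ (log N - 1) * s + 1 / N :=
    negMulLog_le_tangent (sum_nonneg fun i _ ↦ mul_nonneg (hx0 i) (hy0 i)) (by linarith)
  rw [sum_offDiag_negMulLog_mul hx hy]
  grw [sum_le_sum fun i _ ↦ hpair i, hdiag]
  simp only [sum_add_distrib, ← mul_sum, sum_const, card_univ, nsmul_eq_mul, hx, hy, ← hNdef,
    ← hsdef]
  apply le_of_eq
  field_simp
  ring

end OffDiagonal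

/-- The entropy of the induced transition distribution `z` (with `z_{ij} = x_i y_j`
for `i ≠ j` and residual entry `z_0 = 1 - ∑_{i≠j} x_i y_j`) is bounded by
`((2n-1)/n) log n` for any probability vectors `x, y` on `n` outcomes. -/
theorem entropy_rate_upper_bound (n : ℕ) (hn : 0 < n) (x y : Fin n → ℝ)
    (hx0 : ∀ i, 0 ≤ x i) (hy0 : ∀ i, 0 ≤ y i)
    (hx1 : ∑ i, x i = 1) (hy1 : ∑ i, y i = 1) :
    (∑ i, ∑ j, if i ≠ j then Real.negMulLog (x i * y j) else 0)
      + Real.negMulLog (1 - ∑ i, ∑ j, if i ≠ j then x i * y j else 0)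
      ≤ (2 * (n : ℝ) - 1) / n * Real.log n := by
  have : Nonempty (Fin n) := Fin.pos_iff_nonempty.mp hn
  have hN : (1 : ℝ) ≤ n := by exact_mod_cast hn
  set s := ∑ i, x i * y i
  have htarget : (2 * (n : ℝ) - 1) / n * log n = (2 - 1 / n) * log n := by field_simp
  rw [sum_offDiag_mul hx1 hy1, sub_sub_cancel, htarget]
  obtain ⟨c, hc0, hcL, hcN⟩ := exists_cross_coeff hN
  rcases le_total (1 / (n : ℝ)) s with hs | hs
  · calc _ ≤ (2 - s) * log n := by
          simpa using offDiag_entropy_le_two_sub_mul_log hx0 hy0 hx1 hy1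
      _ ≤ _ := by gcongr
  · calc _ ≤ 2 * log n - (c + 1) / n + (c + 1 - log n) * s := by
          simpa using
            offDiag_entropy_le_of_cross_coeff hc0 (by simpa using hcN) hx0 hy0 hx1 hy1
      _ ≤ 2 * log n - (c + 1) / n + (c + 1 - log n) * (1 / n) := by gcongr; linarith
      _ = (2 - 1 / n) * log n := by ring
end

section
/- With z defined as z_{ij} = x_i y_j (i ≠ j) and z_0 = 1 - Σ_{i≠j} x_i y_j from probability vectors x and y, the entropy H(z) attains its maximum value ((2n-1)/n) log n exactly when x_i = 1/n = y_i for all i. -/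
open Real Finset

set_option maxHeartbeats 1000000

noncomputable def Rf (n : ℕ) (t : ℝ) : ℝ := t * Real.log t + t * Real.log n - t + 1/n

lemma Rf_of_pos {n : ℕ} (hn : 0 < n) {t : ℝ} (ht : 0 < t) :
    Rf n t = t * Real.log ((n:ℝ) * t) - t + 1/n := by
  unfold Rf
  rw [Real.log_mul (by exact_mod_cast hn.ne') ht.ne']
  ring

lemma log_ge {t : ℝ} (ht : 0 < t) : 1 - 1/t ≤ Real.log t := by
  simpa [one_div] using Real.one_sub_inv_le_log_of_pos ht

lemma log_gt {t : ℝ} (ht : 0 < t) (ht1 : t ≠ 1) : 1 - 1/t < Real.log t := by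
  have hinv : t⁻¹ ≠ 1 := fun h => ht1 (by simpa using congrArg Inv.inv h)
  have h := Real.log_lt_sub_one_of_pos (inv_pos.2 ht) hinv
  rw [Real.log_inv] at h
  rw [one_div]
  linarith

lemma Rf_nonneg {n : ℕ} (hn : 0 < n) {t : ℝ} (ht : 0 ≤ t) : 0 ≤ Rf n t := by
  rcases ht.eq_or_lt with h | h
  · have h0 : Rf n t = 1/n := by rw [← h]; simp [Rf]
    rw [h0]; positivity
  · rw [Rf_of_pos hn h]
    have hnt : 0 < (n:ℝ) * t := by positivity
    have := log_ge hnt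
    have h2 : t * (1 - 1/((n:ℝ)*t)) ≤ t * Real.log ((n:ℝ)*t) :=
      mul_le_mul_of_nonneg_left this h.le
    have h3 : t * (1 - 1/((n:ℝ)*t)) = t - 1/n := by
      field_simp
    nlinarith [h2, h3]

lemma Rf_pos {n : ℕ} (hn : 0 < n) {t : ℝ} (ht : 0 ≤ t) (hne : t ≠ 1/n) : 0 < Rf n t := by
  have hn' : (0:ℝ) < n := by exact_mod_cast hn
  rcases ht.eq_or_lt with h | h
  · have h0 : Rf n t = 1/n := by rw [← h]; simp [Rf]
    rw [h0]; positivity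
  · rw [Rf_of_pos hn h]
    have hnt : 0 < (n:ℝ) * t := by positivity
    have hne1 : (n:ℝ) * t ≠ 1 := by
      intro hcon
      apply hne
      field_simp
      linarith [hcon]
    have := log_gt hnt hne1
    have h2 : t * (1 - 1/((n:ℝ)*t)) < t * Real.log ((n:ℝ)*t) :=
      mul_lt_mul_of_pos_left this h
    have h3 : t * (1 - 1/((n:ℝ)*t)) = t - 1/n := by
      field_simp
    nlinarith [h2, h3]

lemma Rf_at_c {n : ℕ} (hn : 0 < n) : Rf n (1/n) = 0 := by
  have hn' : (0:ℝ) < n := by exact_mod_cast hn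
  rw [Rf_of_pos hn (by positivity)]
  rw [mul_one_div, div_self hn'.ne', Real.log_one]
  ring
-- square-root lower bound
lemma Rf_sqrt {n : ℕ} (hn : 0 < n) {t : ℝ} (ht : 0 ≤ t) :
    (Real.sqrt t - Real.sqrt (1/n))^2 ≤ Rf n t := by
  have hn' : (0:ℝ) < n := by exact_mod_cast hn
  rcases ht.eq_or_lt with h | h
  · have h0 : Rf n t = 1/n := by rw [← h]; simp [Rf]
    rw [h0, ← h]
    simp [Real.sq_sqrt (by positivity : (0:ℝ) ≤ 1/n)]
  · rw [Rf_of_pos hn h]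
    have hnt : 0 < (n:ℝ) * t := by positivity
    have hsq : Real.sqrt ((n:ℝ)*t) > 0 := Real.sqrt_pos.2 hnt
    have hlog : Real.log ((n:ℝ)*t) = 2 * Real.log (Real.sqrt ((n:ℝ)*t)) := by
      rw [Real.log_sqrt hnt.le]; ring
    have h1 : 1 - 1/Real.sqrt ((n:ℝ)*t) ≤ Real.log (Real.sqrt ((n:ℝ)*t)) := log_ge hsq
    -- t * log(nt) ≥ 2t - 2 t / sqrt(nt)
    have h2 : t * Real.log ((n:ℝ)*t) ≥ 2*t - 2*(t / Real.sqrt ((n:ℝ)*t)) := by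
      rw [hlog]
      have := mul_le_mul_of_nonneg_left h1 (by linarith : (0:ℝ) ≤ 2*t)
      calc 2*t - 2*(t / Real.sqrt ((n:ℝ)*t)) = 2*t*(1 - 1/Real.sqrt ((n:ℝ)*t)) := by
            field_simp
        _ ≤ 2*t*Real.log (Real.sqrt ((n:ℝ)*t)) := this
        _ = t * (2 * Real.log (Real.sqrt ((n:ℝ)*t))) := by ring
    -- t / sqrt(nt) = sqrt t * sqrt (1/n)
    have hst : 0 < Real.sqrt t := Real.sqrt_pos.2 h
    have hsn : 0 < Real.sqrt n := Real.sqrt_pos.2 hn'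
    have htt : Real.sqrt t * Real.sqrt t = t := Real.mul_self_sqrt ht
    have h3 : t / Real.sqrt ((n:ℝ)*t) = Real.sqrt t * Real.sqrt (1/n) := by
      rw [Real.sqrt_mul hn'.le, one_div, Real.sqrt_inv]
      rw [div_eq_iff (by positivity)]
      field_simp
      nlinarith [htt]
    have h4 : (Real.sqrt t)^2 = t := Real.sq_sqrt ht
    have h5 : (Real.sqrt (1/n))^2 = 1/n := Real.sq_sqrt (by positivity)
    nlinarith [h2, h3, h4, h5]

lemma phi_lb {σ : ℝ} (h0 : 0 ≤ σ) (h1 : σ ≤ 1) :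
    (3/8)*(1-σ)^2 ≤ σ * Real.log σ - σ + 1 := by
  rcases h0.eq_or_lt with h | h
  · rw [← h]; norm_num
  · set s := Real.sqrt (Real.sqrt σ) with hs
    have hσs : 0 < Real.sqrt σ := Real.sqrt_pos.2 h
    have hspos : 0 < s := Real.sqrt_pos.2 hσs
    have hs2 : s^2 = Real.sqrt σ := Real.sq_sqrt hσs.le
    have hs4 : s^4 = σ := by
      have : (s^2)^2 = σ := by rw [hs2]; exact Real.sq_sqrt h0
      nlinarith [this]
    have hs1 : s ≤ 1 := by nlinarith [hspos, hs4, pow_pos hspos 4, sq_nonneg (s-1), sq_nonneg (s+1), sq_nonneg (s^2-1), sq_nonneg (s^2+1)]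
    have hlog : Real.log σ = 4 * Real.log s := by
      rw [← hs4, Real.log_pow]; norm_num
    have hlgs : 1 - 1/s ≤ Real.log s := log_ge hspos
    have h2 : σ * Real.log σ ≥ 4*s^4 - 4*s^3 := by
      rw [hlog, ← hs4]
      have := mul_le_mul_of_nonneg_left hlgs (by positivity : (0:ℝ) ≤ 4*s^4)
      calc 4*s^4 - 4*s^3 = 4*s^4 * (1 - 1/s) := by field_simp
        _ ≤ 4*s^4 * Real.log s := this
        _ = s^4 * (4*Real.log s) := by ring
    have key : 8*(3*s^4 - 4*s^3 + 1) - 3*(1-s^4)^2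
        = (1-s)^3*(3*s^5+9*s^4+18*s^3+30*s^2+15*s+5) := by ring
    nlinarith [h2, hs4, key, mul_nonneg (pow_nonneg (by linarith : (0:ℝ) ≤ 1-s) 3)
      (by positivity : (0:ℝ) ≤ 3*s^5+9*s^4+18*s^3+30*s^2+15*s+5)]

lemma Rf_quad_left {n : ℕ} (hn : 0 < n) {b : ℝ} (hb0 : 0 ≤ b) (hbc : b ≤ 1/n) :
    (3/8)*(n:ℝ)*(1/n - b)^2 ≤ Rf n b := by
  have hn' : (0:ℝ) < n := by exact_mod_cast hn
  have hσ0 : 0 ≤ (n:ℝ)*b := by positivity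
  have hσ1 : (n:ℝ)*b ≤ 1 := by
    have := mul_le_mul_of_nonneg_left hbc hn'.le
    rw [mul_one_div, div_self hn'.ne'] at this; exact this
  have hphi := phi_lb hσ0 hσ1
  have hRf : Rf n b = (1/n) * (((n:ℝ)*b) * Real.log ((n:ℝ)*b) - (n:ℝ)*b + 1) := by
    rcases hb0.eq_or_lt with h | h
    · rw [← h]; simp [Rf]
    · rw [Rf_of_pos hn h]; field_simp
  rw [hRf]
  have hexp : (3/8)*(n:ℝ)*(1/n - b)^2 = (1/n) * ((3/8)*(1 - (n:ℝ)*b)^2) := by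
    field_simp
  rw [hexp]
  apply mul_le_mul_of_nonneg_left hphi (by positivity)

lemma Rf_quad {n : ℕ} (hn : 3 ≤ n) {t : ℝ} (ht0 : 0 ≤ t) (ht1 : t ≤ 1) :
    (3/8)*(t - 1/n)^2 ≤ Rf n t := by
  have hn0 : 0 < n := by omega
  have hn' : (3:ℝ) ≤ n := by exact_mod_cast hn
  have h1 := Rf_sqrt hn0 ht0
  have h4 : (Real.sqrt t)^2 = t := Real.sq_sqrt ht0
  have h5 : (Real.sqrt (1/n))^2 = 1/(n:ℝ) := Real.sq_sqrt (by positivity)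
  have hc : 1/(n:ℝ) ≤ 1/3 := by
    rw [div_le_div_iff₀ (by positivity) (by norm_num)]; linarith
  nlinarith [h1, h4, h5, sq_nonneg (Real.sqrt t - Real.sqrt (1/n)),
    sq_nonneg (Real.sqrt t + Real.sqrt (1/n)),
    Real.sqrt_nonneg t, Real.sqrt_nonneg (1/(n:ℝ))]

lemma Rf2_quad {t : ℝ} (ht0 : 0 ≤ t) (ht1 : t ≤ 1) :
    (1/3)*(t - 1/2)^2 ≤ Rf 2 t := by
  have h1 := Rf_sqrt (by norm_num : 0 < 2) ht0
  have h4 : (Real.sqrt t)^2 = t := Real.sq_sqrt ht0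
  have h5 : (Real.sqrt (1/(2:ℕ)))^2 = 1/((2:ℕ):ℝ) := Real.sq_sqrt (by positivity)
  nlinarith [h1, h4, h5, sq_nonneg (Real.sqrt t - Real.sqrt (1/(2:ℕ))),
    sq_nonneg (Real.sqrt t + Real.sqrt (1/(2:ℕ))),
    Real.sqrt_nonneg t, Real.sqrt_nonneg (1/((2:ℕ):ℝ))]

lemma log3_lt : Real.log 3 < 1.10223 := by
  have h9 : Real.log 9 = 2 * Real.log 3 := by
    rw [show (9:ℝ) = 3^2 by norm_num, Real.log_pow]; norm_num
  have h98 : Real.log (9/8) ≤ 9/8 - 1 := Real.log_le_sub_one_of_pos (by norm_num)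
  have h8 : Real.log 8 = 3 * Real.log 2 := by
    rw [show (8:ℝ) = 2^3 by norm_num, Real.log_pow]; norm_num
  have h98' : Real.log 9 = Real.log 8 + Real.log (9/8) := by
    rw [← Real.log_mul (by norm_num) (by norm_num)]; norm_num
  have hl2 := Real.log_two_lt_d9
  nlinarith [h9, h98, h8, h98', hl2]

lemma one_le_log3 : 1 ≤ Real.log 3 := by
  rw [← Real.log_exp 1]
  apply Real.log_le_log (Real.exp_pos 1)
  have := Real.exp_one_lt_d9
  linarith

lemma quart_aux {u M L1 : ℝ} (hu3 : 3 ≤ u^2) (hupos : 0 < u) (hL1 : 0 ≤ L1)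
    (hM : L1 ≤ M) (hMdef : M = 2*u/3 - 0.7955) :
    (L1^2 + (3/2)*L1)*(16*u^2) ≤ 9*(u^2-1)^2 := by
  have h17 : (1.7:ℝ) ≤ u := by nlinarith
  have hM0 : 0 ≤ M := by rw [hMdef]; linarith
  have hsq : L1^2 ≤ M^2 := by nlinarith
  have step1 : (L1^2 + (3/2)*L1)*(16*u^2) ≤ (M^2 + (3/2)*M)*(16*u^2) := by
    have h16 : (0:ℝ) ≤ 16*u^2 := by positivity
    nlinarith [mul_le_mul_of_nonneg_right (add_le_add hsq (by linarith : (3/2)*L1 ≤ (3/2)*M)) h16]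
  have step2 : (M^2 + (3/2)*M)*(16*u^2) ≤ 9*(u^2-1)^2 := by
    rw [hMdef]
    nlinarith [sq_nonneg (u^2-3), mul_nonneg (mul_nonneg hupos.le hupos.le) (sub_nonneg.2 hu3),
      mul_nonneg hupos.le (sub_nonneg.2 hu3), sub_nonneg.2 hu3, sub_nonneg.2 h17,
      mul_nonneg (sub_nonneg.2 h17) (sub_nonneg.2 hu3)]
  linarith

lemma Gp {n : ℕ} (hn : 3 ≤ n) :
    (Real.log n - 1)^2 + (3/2)*(Real.log n - 1) ≤ (9/16)*(((n:ℝ)-1)^2/n) := by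
  have hn' : (3:ℝ) ≤ (n:ℝ) := by exact_mod_cast hn
  have hnpos : (0:ℝ) < n := by linarith
  have hupos : 0 < Real.sqrt n := Real.sqrt_pos.2 hnpos
  have hu2 : (Real.sqrt n)^2 = (n:ℝ) := Real.sq_sqrt hnpos.le
  have hu3 : 3 ≤ (Real.sqrt n)^2 := by rw [hu2]; exact hn'
  have hLu : Real.log n = 2 * Real.log (Real.sqrt n) := by
    rw [← hu2, Real.log_pow]; norm_num
  have htan : Real.log (Real.sqrt n) ≤ Real.log 3 + Real.sqrt n/3 - 1 := by
    have h1 : Real.log (Real.sqrt n) = Real.log 3 + Real.log (Real.sqrt n/3) := by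
      rw [← Real.log_mul (by norm_num) (by positivity)]
      congr 1; field_simp
    have h2 : Real.log (Real.sqrt n/3) ≤ Real.sqrt n/3 - 1 :=
      Real.log_le_sub_one_of_pos (by positivity)
    linarith
  have hM : Real.log n - 1 ≤ 2*(Real.sqrt n)/3 - 0.7955 := by
    have := log3_lt
    nlinarith [htan, hLu]
  have hL1 : 0 ≤ Real.log n - 1 := by
    have h3 : Real.log 3 ≤ Real.log n := Real.log_le_log (by norm_num) hn'
    have := one_le_log3
    linarith
  have key := quart_aux hu3 hupos hL1 hM rfl
  have h16 : (0:ℝ) < 16*(Real.sqrt n)^2 := by positivity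
  rw [show (9:ℝ)/16*(((n:ℝ)-1)^2/n) = (9*(((n:ℝ)-1)^2))/(16*n) by ring,
    le_div_iff₀ (by positivity)]
  nlinarith [key, hu2]

lemma one_lt_log {n : ℕ} (hn : 3 ≤ n) : 1 < Real.log n := by
  have h3 : (1:ℝ) < Real.log 3 := by
    rw [Real.lt_log_iff_exp_lt (by norm_num : (0:ℝ) < 3)]
    have := Real.exp_one_lt_d9
    linarith
  have : Real.log 3 ≤ Real.log n :=
    Real.log_le_log (by norm_num) (by exact_mod_cast hn)
  linarith

lemma core_mixed {n : ℕ} (hn : 3 ≤ n) {a b : ℝ} (ha1 : a ≤ 1) (hb0 : 0 ≤ b)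
    (hca : 1/(n:ℝ) < a) (hbc : b < 1/(n:ℝ)) :
    0 < (Real.log n - 1) * ((a - 1/n) * (b - 1/n)) + ((1-b) * Rf n a + (1-a) * Rf n b) := by
  have hn0 : 0 < n := by omega
  have hN : (3:ℝ) ≤ (n:ℝ) := by exact_mod_cast hn
  have hNpos : (0:ℝ) < n := by linarith
  have hc1 : 1/(n:ℝ) ≤ 1/3 := by
    rw [div_le_div_iff₀ hNpos (by norm_num)]; linarith
  have hc0 : 0 < 1/(n:ℝ) := by positivity
  have hL1 : 0 < Real.log n - 1 := by have := one_lt_log hn; linarith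
  have ha0 : (0:ℝ) ≤ a := by linarith
  have htc : 1/(n:ℝ) - b ≤ 1/(n:ℝ) := by linarith
  rcases ha1.eq_or_lt with haeq | halt
  · -- a = 1
    have hRf1 : Rf n a = (Real.log n - 1) + 1/n := by
      rw [haeq]; simp [Rf]
    rw [hRf1]
    nlinarith [Rf_nonneg hn0 hb0, mul_pos hL1 hc0,
      mul_le_mul_of_nonneg_left htc hL1.le,
      mul_pos (mul_pos hL1 (by linarith : (0:ℝ) < 1 - 1/(n:ℝ))) hc0]
  · by_cases hcase : (Real.log n - 1)*(a - 1/n)*(1/n - b)*n ≤ ((n:ℝ)-1)*Rf n a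
    · have hRfa : 0 ≤ Rf n a := Rf_nonneg hn0 ha0
      have hRfb : 0 < Rf n b := Rf_pos hn0 hb0 (ne_of_lt hbc)
      have s3 : 0 < (1-a)*Rf n b := mul_pos (by linarith) hRfb
      have s2 : (Real.log n - 1)*(a - 1/n)*(1/n - b) ≤ (1-1/n)*Rf n a := by
        have hexp : (1-1/(n:ℝ))*(n:ℝ) = (n:ℝ)-1 := by field_simp
        nlinarith [hcase]
      have s1 : (1-1/(n:ℝ))*Rf n a ≤ (1-b)*Rf n a := by
        apply mul_le_mul_of_nonneg_right _ hRfa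
        linarith
      nlinarith [s1, s2, s3]
    · push_neg at hcase
      have hRfapos : 0 < Rf n a := Rf_pos hn0 ha0 (ne_of_gt hca)
      have hα2 : (3/8)*(a - 1/n)^2 ≤ Rf n a := Rf_quad hn ha0 halt.le
      have htN : (1/(n:ℝ) - b)*n ≤ 1 := by
        have h := mul_le_mul_of_nonneg_right htc hNpos.le
        have h2 : (1/(n:ℝ))*n = 1 := by field_simp
        nlinarith [h, h2]
      have hαb : ((n:ℝ)-1)*((3/8)*(a - 1/n)^2) < (Real.log n - 1)*(a - 1/n) := by
        have h1 : ((n:ℝ)-1)*((3/8)*(a - 1/n)^2) ≤ ((n:ℝ)-1)*Rf n a :=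
          mul_le_mul_of_nonneg_left hα2 (by linarith)
        have hL1α : 0 < (Real.log n - 1)*(a - 1/(n:ℝ)) := mul_pos hL1 (by linarith)
        have h2 : (Real.log n - 1)*(a - 1/n)*(1/n - b)*n ≤ (Real.log n - 1)*(a - 1/n) := by
          nlinarith [mul_le_mul_of_nonneg_left htN hL1α.le]
        linarith
      have hαpos' : (0:ℝ) < a - 1/(n:ℝ) := by linarith
      have hαbound : ((n:ℝ)-1)*(a - 1/n) < (8/3)*(Real.log n - 1) := by
        by_contra hcon
        push_neg at hcon
        have := mul_le_mul_of_nonneg_right hcon (le_of_lt hαpos')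
        nlinarith [this, hαb]
      have hG := Gp hn
      have hG16 : 16*(Real.log n - 1)^2 + 24*(Real.log n - 1) ≤ 9*(((n:ℝ)-1)^2/n) := by
        nlinarith [hG]
      have hNa : ((n:ℝ)-1)*(1-a) > ((n:ℝ)-1)^2/n - (8/3)*(Real.log n - 1) := by
        have hexp : ((n:ℝ)-1)*(1-1/n) = ((n:ℝ)-1)^2/n := by field_simp
        nlinarith [hαbound, hexp]
      have hkey : 16*(Real.log n - 1)^2 < 9*(((n:ℝ)-1)*(1-a)) := by
        nlinarith [hG16, hNa, hL1]
      have y1 : 24*((n:ℝ)*(1-a))*((Real.log n - 1)*(a - 1/n)*(1/n - b)) ≤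
          9*((n:ℝ)*(1-a))^2*(1/n - b)^2 + 16*(Real.log n - 1)^2*(a - 1/n)^2 := by
        nlinarith [sq_nonneg (3*((n:ℝ)*(1-a))*(1/n - b) - 4*(Real.log n - 1)*(a - 1/n))]
      have hc_eq : (1-1/(n:ℝ))*(n:ℝ) = (n:ℝ)-1 := by field_simp
      have hfin : 24*((n:ℝ)*(1-a))*((Real.log n - 1)*(a - 1/n)*(1/n - b)) ≤
          9*((n:ℝ)*(1-a))^2*(1/n - b)^2 + 9*(((n:ℝ)-1)*(1-a))*(a - 1/n)^2 := by
        nlinarith [y1, mul_le_mul_of_nonneg_right hkey.le (sq_nonneg (a - 1/(n:ℝ)))]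
      have hpos24 : 0 < 24*((n:ℝ)*(1-a)) := by
        have : 0 < (n:ℝ)*(1-a) := mul_pos hNpos (by linarith)
        linarith
      have hb' : (1-a)*((3/8)*(n:ℝ)*(1/n - b)^2) ≤ (1-a)*Rf n b := by
        apply mul_le_mul_of_nonneg_left _ (by linarith)
        have := Rf_quad_left hn0 hb0 hbc.le
        nlinarith [this]
      have ha'' : (1-1/(n:ℝ))*((3/8)*(a - 1/n)^2) ≤ (1-1/(n:ℝ))*Rf n a :=
        mul_le_mul_of_nonneg_left hα2 (by linarith)
      have ha' : (1-1/(n:ℝ))*Rf n a < (1-b)*Rf n a := by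
        apply mul_lt_mul_of_pos_right _ hRfapos
        linarith
      have f1 := mul_le_mul_of_nonneg_left hb' hpos24.le
      have f2 := mul_lt_mul_of_pos_left ha' hpos24
      have f3 : 9*(((n:ℝ)-1)*(1-a))*(a - 1/n)^2 ≤ 24*((n:ℝ)*(1-a))*((1-1/(n:ℝ))*Rf n a) := by
        have h := mul_le_mul_of_nonneg_left ha'' hpos24.le
        have expand : 24*((n:ℝ)*(1-a))*((1-1/(n:ℝ))*((3/8)*(a - 1/n)^2))
            = 9*(((n:ℝ)-1)*(1-a))*(a - 1/n)^2 := by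
          field_simp; ring
        linarith [h, expand]
      have H : 24*((n:ℝ)*(1-a))*((Real.log n - 1)*(a - 1/n)*(1/n - b)) <
          24*((n:ℝ)*(1-a))*((1-b)*Rf n a + (1-a)*Rf n b) := by
        linarith [hfin, f1, f2, f3]
      have hstep : (Real.log n - 1)*(a - 1/n)*(1/n - b) < (1-b)*Rf n a + (1-a)*Rf n b :=
        lt_of_mul_lt_mul_left (by linarith [H]) hpos24.le
      linarith [hstep]

lemma core3 {n : ℕ} (hn : 3 ≤ n) {a b : ℝ} (ha0 : 0 ≤ a) (ha1 : a ≤ 1)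
    (hb0 : 0 ≤ b) (hb1 : b ≤ 1) :
    0 ≤ (Real.log n - 1) * ((a - 1/n) * (b - 1/n)) + ((1-b) * Rf n a + (1-a) * Rf n b) ∧
    ((Real.log n - 1) * ((a - 1/n) * (b - 1/n)) + ((1-b) * Rf n a + (1-a) * Rf n b) = 0 →
      a = 1/n ∧ b = 1/n) := by
  have hn0 : 0 < n := by omega
  have hN : (3:ℝ) ≤ (n:ℝ) := by exact_mod_cast hn
  have hc1 : 1/(n:ℝ) ≤ 1/3 := by
    rw [div_le_div_iff₀ (by linarith) (by norm_num)]; linarith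
  have hc0 : 0 < 1/(n:ℝ) := by positivity
  have hL1 : 0 < Real.log n - 1 := by have := one_lt_log hn; linarith
  rcases le_or_gt 0 ((a - 1/(n:ℝ)) * (b - 1/(n:ℝ))) with hprod | hprod
  · -- same side: everything nonneg
    have hA : 0 ≤ (Real.log n - 1) * ((a - 1/(n:ℝ)) * (b - 1/(n:ℝ))) :=
      mul_nonneg hL1.le hprod
    have hB : 0 ≤ (1-b) * Rf n a := mul_nonneg (by linarith) (Rf_nonneg hn0 ha0)
    have hC : 0 ≤ (1-a) * Rf n b := mul_nonneg (by linarith) (Rf_nonneg hn0 hb0)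
    refine ⟨by linarith, fun heq => ?_⟩
    have hA0 : (Real.log n - 1) * ((a - 1/(n:ℝ)) * (b - 1/(n:ℝ))) = 0 := by linarith
    have hB0 : (1-b) * Rf n a = 0 := by linarith
    have hC0 : (1-a) * Rf n b = 0 := by linarith
    by_cases hac : a = 1/(n:ℝ)
    · refine ⟨hac, ?_⟩
      have h1a : (0:ℝ) < 1 - a := by rw [hac]; linarith
      have : Rf n b = 0 := by
        rcases mul_eq_zero.1 hC0 with h | h
        · linarith
        · exact h
      by_contra hbc
      exact absurd this (ne_of_gt (Rf_pos hn0 hb0 hbc))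
    · exfalso
      have hRfa : 0 < Rf n a := Rf_pos hn0 ha0 hac
      have hb1' : b = 1 := by
        rcases mul_eq_zero.1 hB0 with h | h
        · linarith
        · exact absurd h (ne_of_gt hRfa)
      have hbc' : 0 < b - 1/(n:ℝ) := by rw [hb1']; linarith
      have : (a - 1/(n:ℝ)) * (b - 1/(n:ℝ)) = 0 := by
        rcases mul_eq_zero.1 hA0 with h | h
        · exact absurd h (ne_of_gt hL1)
        · exact h
      rcases mul_eq_zero.1 this with h | h
      · exact hac (by linarith)
      · linarith
  · -- mixed signs: strictly positive
    have hpos : 0 < (Real.log n - 1) * ((a - 1/n) * (b - 1/n)) +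
        ((1-b) * Rf n a + (1-a) * Rf n b) := by
      rcases mul_neg_iff.1 hprod with ⟨h1, h2⟩ | ⟨h1, h2⟩
      · exact core_mixed hn ha1 hb0 (by linarith) (by linarith)
      · have := core_mixed hn hb1 ha0 (by linarith) (by linarith)
        linarith [this]
    exact ⟨hpos.le, fun heq => absurd heq (by linarith)⟩

lemma log2_gt : (2:ℝ)/3 < Real.log 2 := by
  have := Real.log_two_gt_d9
  linarith

lemma pair2 {a b : ℝ} (ha0 : 0 ≤ a) (ha1 : a ≤ 1) (hb0 : 0 ≤ b) (hb1 : b ≤ 1) :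
    0 ≤ ((Real.log 2 - 1) * ((a - 1/2) * (b - 1/2)) + ((1-b) * Rf 2 a + (1-a) * Rf 2 b))
      + ((Real.log 2 - 1) * (((1-a) - 1/2) * ((1-b) - 1/2))
         + ((1-(1-b)) * Rf 2 (1-a) + (1-(1-a)) * Rf 2 (1-b))) ∧
    (((Real.log 2 - 1) * ((a - 1/2) * (b - 1/2)) + ((1-b) * Rf 2 a + (1-a) * Rf 2 b))
      + ((Real.log 2 - 1) * (((1-a) - 1/2) * ((1-b) - 1/2))
         + ((1-(1-b)) * Rf 2 (1-a) + (1-(1-a)) * Rf 2 (1-b))) = 0 →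
      a = 1/2 ∧ b = 1/2) := by
  have q1 : (1/3)*(a - 1/2)^2 ≤ Rf 2 a := by
    have := Rf2_quad ha0 ha1; norm_num at this ⊢; linarith
  have q2 : (1/3)*(b - 1/2)^2 ≤ Rf 2 b := by
    have := Rf2_quad hb0 hb1; norm_num at this ⊢; linarith
  have q3 : (1/3)*(a - 1/2)^2 ≤ Rf 2 (1-a) := by
    have := Rf2_quad (by linarith : (0:ℝ) ≤ 1-a) (by linarith : (1:ℝ)-a ≤ 1)
    norm_num at this ⊢; nlinarith [this]
  have q4 : (1/3)*(b - 1/2)^2 ≤ Rf 2 (1-b) := by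
    have := Rf2_quad (by linarith : (0:ℝ) ≤ 1-b) (by linarith : (1:ℝ)-b ≤ 1)
    norm_num at this ⊢; nlinarith [this]
  have hlog := log2_gt
  have hlog1 : Real.log 2 < 1 := by
    have := Real.log_two_lt_d9; linarith
  have key : (Real.log 2 - (2:ℝ)/3) * ((a-1/2)^2 + (b-1/2)^2) ≤
      ((Real.log 2 - 1) * ((a - 1/2) * (b - 1/2)) + ((1-b) * Rf 2 a + (1-a) * Rf 2 b))
      + ((Real.log 2 - 1) * (((1-a) - 1/2) * ((1-b) - 1/2))
         + ((1-(1-b)) * Rf 2 (1-a) + (1-(1-a)) * Rf 2 (1-b))) := by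
    nlinarith [mul_le_mul_of_nonneg_left q1 (by linarith : (0:ℝ) ≤ 1-b),
      mul_le_mul_of_nonneg_left q2 (by linarith : (0:ℝ) ≤ 1-a),
      mul_le_mul_of_nonneg_left q3 hb0,
      mul_le_mul_of_nonneg_left q4 ha0,
      mul_nonneg (by linarith : (0:ℝ) ≤ 1 - Real.log 2) (sq_nonneg ((a-1/2) - (b-1/2))),
      mul_nonneg (by linarith : (0:ℝ) ≤ 1 - Real.log 2) (sq_nonneg ((a-1/2) + (b-1/2)))]
  constructor
  · nlinarith [key, sq_nonneg (a-1/2), sq_nonneg (b-1/2), hlog]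
  · intro heq
    have h0 : (Real.log 2 - (2:ℝ)/3) * ((a-1/2)^2 + (b-1/2)^2) ≤ 0 := by linarith
    have hsq : (a-1/2)^2 + (b-1/2)^2 ≤ 0 := by
      by_contra hcon
      push_neg at hcon
      nlinarith [mul_pos (by linarith : (0:ℝ) < Real.log 2 - 2/3) hcon]
    constructor <;> nlinarith [sq_nonneg (a-1/2), sq_nonneg (b-1/2)]

lemma sum_offdiag {n : ℕ} (f : Fin n → Fin n → ℝ) :
    ∑ i, ∑ j, (if i ≠ j then f i j else 0) = (∑ i, ∑ j, f i j) - ∑ i, f i i := by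
  have per : ∀ i : Fin n, ∑ j, (if i ≠ j then f i j else 0) = (∑ j, f i j) - f i i := by
    intro i
    have hpt : ∀ j, (if i ≠ j then f i j else 0) = f i j - (if i = j then f i j else 0) := by
      intro j; by_cases h : i = j <;> simp [h]
    rw [Finset.sum_congr rfl (fun j _ => hpt j), Finset.sum_sub_distrib, Finset.sum_ite_eq]
    simp
  rw [Finset.sum_congr rfl (fun i _ => per i), Finset.sum_sub_distrib]

lemma master_identity {n : ℕ} (hn : 0 < n) (x y : Fin n → ℝ)
    (hx1 : ∑ i, x i = 1) (hy1 : ∑ i, y i = 1) :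
    ((∑ i, ∑ j, if i ≠ j then Real.negMulLog (x i * y j) else 0)
        + Real.negMulLog (1 - ∑ i, ∑ j, if i ≠ j then x i * y j else 0))
      + (Rf n (∑ i, x i * y i)
         + ∑ i, ((Real.log n - 1) * ((x i - 1/n) * (y i - 1/n))
                 + ((1 - y i) * Rf n (x i) + (1 - x i) * Rf n (y i))))
      = (2*(n:ℝ) - 1)/n * Real.log n := by
  have hN : (0:ℝ) < n := by exact_mod_cast hn
  -- off-diagonal product sum
  have hxy : ∑ i, ∑ j, (x i * y j) = 1 := by
    have : ∀ i : Fin n, ∑ j, x i * y j = x i := by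
      intro i
      rw [← Finset.mul_sum, hy1, mul_one]
    rw [Finset.sum_congr rfl (fun i _ => this i), hx1]
  have hoff : ∑ i, ∑ j, (if i ≠ j then x i * y j else 0)
      = 1 - ∑ i, x i * y i := by
    rw [sum_offdiag, hxy]
  -- negMulLog double sum
  have hnml : ∑ i, ∑ j, Real.negMulLog (x i * y j)
      = (∑ i, Real.negMulLog (x i)) + ∑ i, Real.negMulLog (y i) := by
    have per : ∀ i : Fin n, ∑ j, Real.negMulLog (x i * y j)
        = Real.negMulLog (x i) + x i * ∑ j, Real.negMulLog (y j) := by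
      intro i
      have hpt : ∀ j, Real.negMulLog (x i * y j)
          = y j * Real.negMulLog (x i) + x i * Real.negMulLog (y j) := by
        intro j; exact Real.negMulLog_mul _ _
      rw [Finset.sum_congr rfl (fun j _ => hpt j), Finset.sum_add_distrib,
        ← Finset.sum_mul, ← Finset.mul_sum, hy1, one_mul]
    rw [Finset.sum_congr rfl (fun i _ => per i), Finset.sum_add_distrib,
      ← Finset.sum_mul, hx1, one_mul]
  have hnmloff : ∑ i, ∑ j, (if i ≠ j then Real.negMulLog (x i * y j) else 0)
      = (∑ i, Real.negMulLog (x i)) + (∑ i, Real.negMulLog (y i))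
        - ∑ i, Real.negMulLog (x i * y i) := by
    rw [sum_offdiag, hnml]
  -- expand the g-sum
  have hpt : ∀ i : Fin n, (Real.log n - 1) * ((x i - 1/n) * (y i - 1/n))
                 + ((1 - y i) * Rf n (x i) + (1 - x i) * Rf n (y i))
      = (1 - Real.log n) * (x i * y i)
        + ((Real.log n - 1) - 1/n - (Real.log n - 1)/n) * (x i)
        + ((Real.log n - 1) - 1/n - (Real.log n - 1)/n) * (y i)
        + ((Real.log n - 1)/(n:ℝ)^2 + 2/n)
        - Real.negMulLog (x i) - Real.negMulLog (y i)
        + Real.negMulLog (x i * y i) := by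
    intro i
    rw [Real.negMulLog_mul]
    simp only [Rf, Real.negMulLog]
    ring
  have hgsum : ∑ i, ((Real.log n - 1) * ((x i - 1/n) * (y i - 1/n))
                 + ((1 - y i) * Rf n (x i) + (1 - x i) * Rf n (y i)))
      = (1 - Real.log n) * (∑ i, x i * y i)
        + ((Real.log n - 1) - 1/n - (Real.log n - 1)/n)
        + ((Real.log n - 1) - 1/n - (Real.log n - 1)/n)
        + (n:ℝ) * ((Real.log n - 1)/(n:ℝ)^2 + 2/n)
        - (∑ i, Real.negMulLog (x i)) - (∑ i, Real.negMulLog (y i))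
        + ∑ i, Real.negMulLog (x i * y i) := by
    rw [Finset.sum_congr rfl (fun i _ => hpt i)]
    simp only [Finset.sum_add_distrib, Finset.sum_sub_distrib, ← Finset.mul_sum,
      Finset.sum_const, Finset.card_univ, Fintype.card_fin, nsmul_eq_mul, hx1, hy1, mul_one]
    ring
  rw [hnmloff, hoff, hgsum]
  simp only [Rf, Real.negMulLog]
  field_simp
  ring

/-- The entropy of the induced distribution `z` (with `z_{ij} = x_i y_j` for `i ≠ j`
and residual `z_0`) attains its maximum value `((2n-1)/n) log n` exactly when
`x_i = 1/n = y_i` for all `i`. -/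
theorem entropy_max_iff_uniform (n : ℕ) (hn : 0 < n) (x y : Fin n → ℝ)
    (hx0 : ∀ i, 0 ≤ x i) (hy0 : ∀ i, 0 ≤ y i)
    (hx1 : ∑ i, x i = 1) (hy1 : ∑ i, y i = 1) :
    ((∑ i, ∑ j, if i ≠ j then Real.negMulLog (x i * y j) else 0)
        + Real.negMulLog (1 - ∑ i, ∑ j, if i ≠ j then x i * y j else 0)
      = (2 * (n : ℝ) - 1) / n * Real.log n)
    ↔ (∀ i, x i = 1 / n ∧ y i = 1 / n) := by
  have hkey := master_identity hn x y hx1 hy1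
  have hxle : ∀ i, x i ≤ 1 := by
    intro i
    calc x i ≤ ∑ j, x j := Finset.single_le_sum (fun j _ => hx0 j) (Finset.mem_univ i)
      _ = 1 := hx1
  have hyle : ∀ i, y i ≤ 1 := by
    intro i
    calc y i ≤ ∑ j, y j := Finset.single_le_sum (fun j _ => hy0 j) (Finset.mem_univ i)
      _ = 1 := hy1
  have hs0 : 0 ≤ ∑ i, x i * y i :=
    Finset.sum_nonneg (fun i _ => mul_nonneg (hx0 i) (hy0 i))
  rcases lt_or_ge n 3 with hlt | h3
  · interval_cases n
    · -- n = 1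
      have hx01 : x 0 = 1 := by rw [Fin.sum_univ_one] at hx1; exact hx1
      have hy01 : y 0 = 1 := by rw [Fin.sum_univ_one] at hy1; exact hy1
      have hLHS : ((∑ i, ∑ j, if i ≠ j then Real.negMulLog (x i * y j) else 0)
          + Real.negMulLog (1 - ∑ i, ∑ j, if i ≠ j then x i * y j else 0)
        = (2 * ((1:ℕ) : ℝ) - 1) / ((1:ℕ):ℝ) * Real.log ((1:ℕ):ℝ)) := by
        simp
      have hRHS : ∀ i : Fin 1, x i = 1 / ((1:ℕ):ℝ) ∧ y i = 1 / ((1:ℕ):ℝ) := by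
        intro i
        have : i = 0 := Subsingleton.elim i 0
        rw [this]
        norm_num [hx01, hy01]
      exact iff_of_true hLHS hRHS
    · -- n = 2
      have hn0 : 0 < 2 := by norm_num
      constructor
      · intro hE
        rw [hE] at hkey
        have hD : Rf 2 (∑ i, x i * y i)
            + ∑ i : Fin 2, ((Real.log (2:ℕ) - 1) * ((x i - 1/(2:ℕ)) * (y i - 1/(2:ℕ)))
                 + ((1 - y i) * Rf 2 (x i) + (1 - x i) * Rf 2 (y i))) = 0 := by
          linarith [hkey]
        have hx1' : x 1 = 1 - x 0 := by rw [Fin.sum_univ_two] at hx1; linarith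
        have hy1' : y 1 = 1 - y 0 := by rw [Fin.sum_univ_two] at hy1; linarith
        simp only [Fin.sum_univ_two] at hD
        rw [hx1', hy1'] at hD
        push_cast at hD
        have hprod : 0 ≤ x 0 * y 0 + (1 - x 0) * (1 - y 0) := by
          have h1 := mul_nonneg (hx0 0) (hy0 0)
          have h2 := mul_nonneg (sub_nonneg.2 (hxle 0)) (sub_nonneg.2 (hyle 0))
          linarith
        have hRs : 0 ≤ Rf 2 (x 0 * y 0 + (1 - x 0) * (1 - y 0)) :=
          Rf_nonneg hn0 hprod
        have hp := pair2 (hx0 0) (hxle 0) (hy0 0) (hyle 0)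
        have hzero : ((Real.log 2 - 1) * ((x 0 - 1/2) * (y 0 - 1/2))
            + ((1 - y 0) * Rf 2 (x 0) + (1 - x 0) * Rf 2 (y 0)))
          + ((Real.log 2 - 1) * (((1 - x 0) - 1/2) * ((1 - y 0) - 1/2))
            + ((1 - (1 - y 0)) * Rf 2 (1 - x 0) + (1 - (1 - x 0)) * Rf 2 (1 - y 0))) = 0 := by
          linarith [hD, hRs, hp.1]
        obtain ⟨hX, hY⟩ := hp.2 hzero
        intro i
        have h01 : i = 0 ∨ i = 1 := by
          rcases i with ⟨iv, hiv⟩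
          interval_cases iv
          · left; rfl
          · right; rfl
        rcases h01 with rfl | rfl
        · constructor
          · rw [hX]; norm_num
          · rw [hY]; norm_num
        · constructor
          · rw [hx1', hX]; norm_num
          · rw [hy1', hY]; norm_num
      · intro hu
        have hgz : ∀ i : Fin 2, (Real.log (2:ℕ) - 1) * ((x i - 1/(2:ℕ)) * (y i - 1/(2:ℕ)))
                 + ((1 - y i) * Rf 2 (x i) + (1 - x i) * Rf 2 (y i)) = 0 := by
          intro i
          rw [(hu i).1, (hu i).2, Rf_at_c hn0]
          ring
        have hs : ∑ i, x i * y i = 1/((2:ℕ):ℝ) := by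
          have : ∀ i : Fin 2, x i * y i = 1/((2:ℕ):ℝ)^2 := by
            intro i
            rw [(hu i).1, (hu i).2]
            field_simp
          rw [Finset.sum_congr rfl (fun i _ => this i), Finset.sum_const,
            Finset.card_univ, Fintype.card_fin, nsmul_eq_mul]
          field_simp
        rw [hs, Rf_at_c hn0, Finset.sum_congr rfl (fun i _ => hgz i),
          Finset.sum_const] at hkey
        simpa using hkey
  · -- n ≥ 3
    have hn0 : 0 < n := by omega
    constructor
    · intro hE
      rw [hE] at hkey
      have hD : Rf n (∑ i, x i * y i)
          + ∑ i, ((Real.log n - 1) * ((x i - 1/n) * (y i - 1/n))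
                 + ((1 - y i) * Rf n (x i) + (1 - x i) * Rf n (y i))) = 0 := by
        linarith [hkey]
      have hRs : 0 ≤ Rf n (∑ i, x i * y i) := Rf_nonneg hn0 hs0
      have hgpos : ∀ i ∈ Finset.univ, (0:ℝ) ≤ (Real.log n - 1) * ((x i - 1/n) * (y i - 1/n))
                 + ((1 - y i) * Rf n (x i) + (1 - x i) * Rf n (y i)) :=
        fun i _ => (core3 h3 (hx0 i) (hxle i) (hy0 i) (hyle i)).1
      have hsum_nonneg := Finset.sum_nonneg hgpos
      have hsum0 : ∑ i, ((Real.log n - 1) * ((x i - 1/n) * (y i - 1/n))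
                 + ((1 - y i) * Rf n (x i) + (1 - x i) * Rf n (y i))) = 0 := by
        linarith
      have heach := (Finset.sum_eq_zero_iff_of_nonneg hgpos).1 hsum0
      intro i
      exact (core3 h3 (hx0 i) (hxle i) (hy0 i) (hyle i)).2 (heach i (Finset.mem_univ i))
    · intro hu
      have hNpos : (0:ℝ) < n := by exact_mod_cast hn0
      have hgz : ∀ i : Fin n, (Real.log n - 1) * ((x i - 1/n) * (y i - 1/n))
                 + ((1 - y i) * Rf n (x i) + (1 - x i) * Rf n (y i)) = 0 := by
        intro i
        rw [(hu i).1, (hu i).2, Rf_at_c hn0]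
        ring
      have hs : ∑ i, x i * y i = 1/(n:ℝ) := by
        have : ∀ i : Fin n, x i * y i = 1/(n:ℝ)^2 := by
          intro i
          rw [(hu i).1, (hu i).2]
          field_simp
        rw [Finset.sum_congr rfl (fun i _ => this i), Finset.sum_const,
          Finset.card_univ, Fintype.card_fin, nsmul_eq_mul]
        field_simp
      rw [hs, Rf_at_c hn0, Finset.sum_congr rfl (fun i _ => hgz i),
        Finset.sum_const] at hkey
      simpa using hkey
end

section
/- The Dirichlet-multinomial distribution s_a = C(N; a_1,...,a_n) · (Π_{i=1}^n (α)_{a_i}) / (nα)_N, with α = Nμ/(n-1-nμ), satisfies the detailed balance condition s_a · T_a^{a+i_{jk}} = s_{a+i_{jk}} · T_{a+i_{jk}}^a for the neutral Moran process with uniform mutation, where T_a^{a+i_{jk}} = (ā_j(1-μ) + (μ/(n-1))(1-ā_j)) · ā_k. -/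
open Real Finset

/-! With `α = Nμ/(n-1-nμ)` the mutation term is absorbed into a shift: the rate `T_c^{c+i_{uv}}`
equals `λ (α + c_u) c_v` for a constant `λ`. Moving one individual from type `k` to type `j`
multiplies the multinomial coefficient by `a_k / (a_j + 1)` and the product of rising factorials
by `(α + a_j) / (α + a_k - 1)`, which is exactly the inverse of the ratio of the two rates.
Both ratios are proved in multiplied-out form, so no positivity of `α` is needed. -/

/-- Rising factorial `(x)_k = x (x+1) ⋯ (x+k-1)`, with `(x)_0 = 1`. -/
noncomputable def risingFac (x : ℝ) (k : ℕ) : ℝ :=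
  ∏ i ∈ Finset.range k, (x + (i : ℝ))

lemma risingFac_succ (x : ℝ) (m : ℕ) :
    risingFac x (m + 1) = risingFac x m * (x + m) :=
  prod_range_succ _ _

section UnitShift

variable {ι : Type*} [Fintype ι] [DecidableEq ι] {j k : ι}

@[to_additive]
lemma Finset.prod_comp_update_update_mul {β M : Type*} [CommMonoid M] (F : β → M) (c : ι → β)
    (hjk : j ≠ k) {x y : β} {u v : M} (hx : F x = F (c j) * u) (hy : F (c k) = F y * v) :
    (∏ l, F (Function.update (Function.update c j x) k y l)) * v = (∏ l, F (c l)) * u := by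
  have hj : j ∈ univ \ {k} := by simpa using hjk
  simp only [Function.apply_update (fun _ => F)]
  rw [prod_update_of_mem (mem_univ k), prod_update_of_mem hj,
    prod_eq_mul_prod_sdiff_singleton_of_mem (mem_univ k),
    prod_eq_mul_prod_sdiff_singleton_of_mem hj, hx, hy]
  ac_rfl

lemma Nat.multinomial_update_update_mul (c : ι → ℕ) (hjk : j ≠ k) (hk : 1 ≤ c k) :
    Nat.multinomial univ (Function.update (Function.update c j (c j + 1)) k (c k - 1)) *
      (c j + 1) = Nat.multinomial univ c * c k := by
  set b := Function.update (Function.update c j (c j + 1)) k (c k - 1)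
  have hsum : ∑ l, b l = ∑ l, c l := by
    have h : ∑ l, b l + 1 = ∑ l, c l + 1 :=
      sum_comp_update_update_add id c hjk rfl (Nat.sub_add_cancel hk).symm
    omega
  have hfac : (∏ l, (b l).factorial) * c k = (∏ l, (c l).factorial) * (c j + 1) :=
    prod_comp_update_update_mul Nat.factorial c hjk ((c j).factorial_succ.trans (mul_comm _ _))
      (by rw [← Nat.mul_factorial_pred (by omega : c k ≠ 0), mul_comm])
  apply Nat.eq_of_mul_eq_mul_right (prod_pos fun l _ => (c l).factorial_pos)
  calc multinomial univ b * (c j + 1) * ∏ l, (c l).factorial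
      = multinomial univ b * ((∏ l, (b l).factorial) * c k) := by rw [hfac]; ring
    _ = (∑ l, b l).factorial * c k := by rw [← multinomial_spec]; ring
    _ = multinomial univ c * c k * ∏ l, (c l).factorial := by
      rw [hsum, ← multinomial_spec]; ring

lemma prod_risingFac_update_update_mul (x : ℝ) (c : ι → ℕ) (hjk : j ≠ k) (hk : 1 ≤ c k) :
    (∏ l, risingFac x (Function.update (Function.update c j (c j + 1)) k (c k - 1) l)) *
      (x + c k - 1) = (∏ l, risingFac x (c l)) * (x + c j) := by
  refine prod_comp_update_update_mul (risingFac x) c hjk (risingFac_succ x (c j)) ?_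
  conv_lhs => rw [← Nat.sub_add_cancel hk]
  rw [risingFac_succ, Nat.cast_sub hk, Nat.cast_one, add_sub_assoc]

end UnitShift

lemma moran_transition_eq {N n μ : ℝ} (x : ℝ) (hN : N ≠ 0) (hn : n - 1 ≠ 0)
    (hden : n - 1 - n * μ ≠ 0) :
    x / N * (1 - μ) + μ / (n - 1) * (1 - x / N) =
      (n - 1 - n * μ) / (n - 1) * ((N * μ / (n - 1 - n * μ) + x) / N) := by
  rw [div_mul_div_comm, mul_add, mul_div_cancel₀ _ hden]
  field_simp
  ring

theorem dirichlet_multinomial_detailed_balance_general (n N : ℕ)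
    (μ : ℝ) (hμ : μ ∈ Set.Ioo (0 : ℝ) (((n : ℝ) - 1) / n))
    (α : ℝ) (hα : α = (N : ℝ) * μ / ((n : ℝ) - 1 - n * μ))
    (a : Fin n → ℕ) (ha : ∑ i, a i = N)
    (j k : Fin n) (hjk : j ≠ k) (hak : 1 ≤ a k) :
    let s : (Fin n → ℕ) → ℝ := fun c =>
      (Nat.multinomial Finset.univ c : ℝ) * (∏ i, risingFac α (c i)) / risingFac ((n : ℝ) * α) N
    let T : (Fin n → ℕ) → Fin n → Fin n → ℝ := fun c u v =>
      (((c u : ℝ) / N) * (1 - μ) + μ / ((n : ℝ) - 1) * (1 - (c u : ℝ) / N)) * ((c v : ℝ) / N)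
    let b : Fin n → ℕ := Function.update (Function.update a j (a j + 1)) k (a k - 1)
    s a * T a j k = s b * T b k j := by
  intro s T b
  have hbj : b j = a j + 1 := by simp [b, Function.update_of_ne hjk]
  have hbk : b k = a k - 1 := by simp [b]
  have hN : (N : ℝ) ≠ 0 := by
    have : a k ≤ N := ha ▸ single_le_sum (fun _ _ => Nat.zero_le _) (mem_univ k)
    exact Nat.cast_ne_zero.2 (by omega)
  have hn : (2 : ℝ) ≤ n := by
    exact_mod_cast Fintype.card_fin n ▸ Fintype.one_lt_card_iff.2 ⟨j, k, hjk⟩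
  have hden : (n : ℝ) - 1 - n * μ ≠ 0 := by
    have := (lt_div_iff₀' (by linarith)).1 hμ.2
    linarith
  have hM := congrArg (Nat.cast : ℕ → ℝ) (Nat.multinomial_update_update_mul a hjk hak)
  push_cast at hM
  have hP := prod_risingFac_update_update_mul α a hjk hak
  simp only [s, T, hbj, hbk]
  rw [moran_transition_eq _ hN (by linarith) hden, moran_transition_eq _ hN (by linarith) hden,
    ← hα, Nat.cast_sub hak]
  push_cast
  linear_combination ((n - 1 - n * μ) / (n - 1) / (N * N * risingFac (n * α) N)) *
    (-(∏ i, risingFac α (a i)) * (α + a j) * hM - Nat.multinomial univ b * (a j + 1) * hP)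

/-- The Dirichlet-multinomial distribution
`s_a = C(N;a) (∏_i (α)_{a_i}) / (nα)_N`, with `α = Nμ/(n-1-nμ)`, satisfies the
detailed balance condition `s_a T_a^{a+i_{jk}} = s_{a+i_{jk}} T_{a+i_{jk}}^a` for the
neutral Moran process with uniform mutation, where
`T_a^{a+i_{jk}} = (ā_j(1-μ) + (μ/(n-1))(1-ā_j)) ā_k`. -/
theorem dirichlet_multinomial_detailed_balance (n N : ℕ) (hn : 2 ≤ n) (hN : 0 < N)
    (μ : ℝ) (hμ : μ ∈ Set.Ioo (0 : ℝ) (((n : ℝ) - 1) / n))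
    (α : ℝ) (hα : α = (N : ℝ) * μ / ((n : ℝ) - 1 - n * μ))
    (a : Fin n → ℕ) (ha : ∑ i, a i = N)
    (j k : Fin n) (hjk : j ≠ k) (hak : 1 ≤ a k) :
    let s : (Fin n → ℕ) → ℝ := fun c =>
      (Nat.multinomial Finset.univ c : ℝ) * (∏ i, risingFac α (c i)) / risingFac ((n : ℝ) * α) N
    let T : (Fin n → ℕ) → Fin n → Fin n → ℝ := fun c u v =>
      (((c u : ℝ) / N) * (1 - μ) + μ / ((n : ℝ) - 1) * (1 - (c u : ℝ) / N)) * ((c v : ℝ) / N)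
    let b : Fin n → ℕ := Function.update (Function.update a j (a j + 1)) k (a k - 1)
    s a * T a j k = s b * T b k j :=
  dirichlet_multinomial_detailed_balance_general n N μ hμ α hα a ha j k hjk hak
end

section
/- If μ = (n-1)/n, the distribution s_a = C(N;a) n^{-N} satisfies detailed balance for the neutral Moran process with uniform mutation: the transition probability T_a^{a+i_{jk}} equals ā_k/n regardless of the incentive, and s_a T_a^{a+i_{jk}} = s_{a+i_{jk}} T_{a+i_{jk}}^a. -/
open Real Finset

lemma db_prod_key {n : ℕ} (a : Fin n → ℕ) (j k : Fin n) (hjk : j ≠ k) (hak : 1 ≤ a k) :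
    a k * ∏ i, (Function.update (Function.update a j (a j + 1)) k (a k - 1) i).factorial
      = (a j + 1) * ∏ i, (a i).factorial := by
  set b := Function.update (Function.update a j (a j + 1)) k (a k - 1) with hb
  have hkmem : k ∈ (Finset.univ : Finset (Fin n)) := Finset.mem_univ k
  have hjmem : j ∈ (Finset.univ : Finset (Fin n)).erase k := by
    simp [Finset.mem_erase, hjk]
  rw [← Finset.mul_prod_erase Finset.univ (fun i => (b i).factorial) hkmem,
      ← Finset.mul_prod_erase _ (fun i => (b i).factorial) hjmem,
      ← Finset.mul_prod_erase Finset.univ (fun i => (a i).factorial) hkmem,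
      ← Finset.mul_prod_erase _ (fun i => (a i).factorial) hjmem]
  have h1 : b k = a k - 1 := by simp [hb]
  have h2 : b j = a j + 1 := by simp [hb, Function.update_of_ne hjk]
  have h3 : ∀ i ∈ ((Finset.univ : Finset (Fin n)).erase k).erase j, b i = a i := by
    intro i hi
    simp only [Finset.mem_erase] at hi
    simp [hb, Function.update_of_ne hi.2.1, Function.update_of_ne hi.1]
  rw [h1, h2, Finset.prod_congr rfl (fun i hi => by rw [h3 i hi])]
  have hfk : (a k).factorial = a k * (a k - 1).factorial := by
    rcases Nat.exists_eq_add_of_le hak with ⟨m, hm⟩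
    rw [hm, Nat.add_comm, Nat.add_sub_cancel, Nat.factorial_succ]
  rw [Nat.factorial_succ, hfk]
  ring

lemma db_sum_key {n : ℕ} (a : Fin n → ℕ) (j k : Fin n) (hjk : j ≠ k) (hak : 1 ≤ a k) :
    ∑ i, Function.update (Function.update a j (a j + 1)) k (a k - 1) i = ∑ i, a i := by
  set b := Function.update (Function.update a j (a j + 1)) k (a k - 1) with hb
  have hkmem : k ∈ (Finset.univ : Finset (Fin n)) := Finset.mem_univ k
  have hjmem : j ∈ (Finset.univ : Finset (Fin n)).erase k := by
    simp [Finset.mem_erase, hjk]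
  rw [← Finset.add_sum_erase Finset.univ b hkmem,
      ← Finset.add_sum_erase _ b hjmem,
      ← Finset.add_sum_erase Finset.univ a hkmem,
      ← Finset.add_sum_erase _ a hjmem]
  have h1 : b k = a k - 1 := by simp [hb]
  have h2 : b j = a j + 1 := by simp [hb, Function.update_of_ne hjk]
  have h3 : ∀ i ∈ ((Finset.univ : Finset (Fin n)).erase k).erase j, b i = a i := by
    intro i hi
    simp only [Finset.mem_erase] at hi
    simp [hb, Function.update_of_ne hi.2.1, Function.update_of_ne hi.1]
  rw [h1, h2, Finset.sum_congr rfl (fun i hi => by rw [h3 i hi])]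
  have hef : ∑ x ∈ ((Finset.univ.erase k).erase j), a x
      = ((Finset.univ.erase k).erase j).sum a := rfl
  omega

/-- For `μ = (n-1)/n` with uniform mutation (`M_{uv} = 1/n` for all `u, v`), the
reproduction probability equals `1/n` for any incentive `φ`, so the transition
probability is `T_a^{a+i_{jk}} = ā_k/n`, and the distribution `s_a = C(N;a) n^{-N}`
satisfies detailed balance. -/
theorem detailed_balance_mu_critical (n N : ℕ) (hn : 2 ≤ n) (hN : 0 < N)
    (φ : (Fin n → ℕ) → Fin n → ℝ) (hφ : ∀ c, ∑ i, φ c i ≠ 0)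
    (a : Fin n → ℕ) (ha : ∑ i, a i = N)
    (j k : Fin n) (hjk : j ≠ k) (hak : 1 ≤ a k) :
    let p : (Fin n → ℕ) → Fin n → ℝ := fun c u =>
      (∑ i, φ c i * (1 / (n : ℝ))) / (∑ i, φ c i)
    let T : (Fin n → ℕ) → Fin n → Fin n → ℝ := fun c u v => p c u * ((c v : ℝ) / N)
    let s : (Fin n → ℕ) → ℝ := fun c => (Nat.multinomial Finset.univ c : ℝ) / (n : ℝ) ^ N
    let b : Fin n → ℕ := Function.update (Function.update a j (a j + 1)) k (a k - 1)
    (∀ c u, p c u = 1 / n)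
    ∧ T a j k = ((a k : ℝ) / N) / n
    ∧ s a * T a j k = s b * T b k j := by
  intro p T s b
  have hp : ∀ c u, p c u = 1 / n := by
    intro c u
    show (∑ i, φ c i * (1 / (n : ℝ))) / (∑ i, φ c i) = 1 / n
    rw [← Finset.sum_mul, mul_comm, mul_div_assoc, div_self (hφ c), mul_one]
  refine ⟨hp, ?_, ?_⟩
  · show p a j * ((a k : ℝ) / N) = ((a k : ℝ) / N) / n
    rw [hp a j]; ring
  · show s a * (p a j * ((a k : ℝ) / N)) = s b * (p b k * ((b j : ℝ) / N))
    rw [hp a j, hp b k]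
    have hbj : b j = a j + 1 := by
      show Function.update (Function.update a j (a j + 1)) k (a k - 1) j = a j + 1
      rw [Function.update_of_ne hjk, Function.update_self]
    -- key nat identity
    have hsum : ∑ i, b i = N := by rw [db_sum_key a j k hjk hak, ha]
    have hprodb : (∏ i, (b i).factorial) ≠ 0 :=
      Finset.prod_ne_zero_iff.mpr (fun i _ => Nat.factorial_ne_zero _)
    have hmul : Nat.multinomial Finset.univ a * a k
        = Nat.multinomial Finset.univ b * (a j + 1) := by
      refine Nat.eq_of_mul_eq_mul_left (Nat.pos_of_ne_zero hprodb) ?_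
      calc (∏ i, (b i).factorial) * (Nat.multinomial Finset.univ a * a k)
            = Nat.multinomial Finset.univ a * (a k * ∏ i, (b i).factorial) := by ring
          _ = Nat.multinomial Finset.univ a * ((a j + 1) * ∏ i, (a i).factorial) := by
              rw [db_prod_key a j k hjk hak]
          _ = (a j + 1) * (Nat.multinomial Finset.univ a * ∏ i, (a i).factorial) := by ring
          _ = (a j + 1) * (∑ i, a i).factorial := by
              rw [mul_comm (Nat.multinomial Finset.univ a), Nat.multinomial_spec]
          _ = (a j + 1) * (∑ i, b i).factorial := by rw [ha, hsum]
          _ = (a j + 1) * (Nat.multinomial Finset.univ b * ∏ i, (b i).factorial) := by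
              rw [← Nat.multinomial_spec]; ring
          _ = (∏ i, (b i).factorial) * (Nat.multinomial Finset.univ b * (a j + 1)) := by ring
    have hcast : (Nat.multinomial Finset.univ a : ℝ) * (a k : ℝ)
        = (Nat.multinomial Finset.univ b : ℝ) * ((a j : ℝ) + 1) := by
      exact_mod_cast congrArg (Nat.cast : ℕ → ℝ) hmul
    show (Nat.multinomial Finset.univ a : ℝ) / (n : ℝ) ^ N * (1 / n * ((a k : ℝ) / N))
        = (Nat.multinomial Finset.univ b : ℝ) / (n : ℝ) ^ N * (1 / n * ((b j : ℝ) / N))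
    rw [hbj]
    push_cast
    field_simp
    nlinarith [hcast]
end
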